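/- Suppose for each vertex $x \in V$ the local transition matrix $\mathsf M_x$ has a real eigenvalue $\lambda$ with left eigenvector $f_x$ (i.e. $f_x \mathsf M_x = \lambda f_x$). Define $f(x,\rho) = \prod_{v\in V} f_v(\rho(v))$ on the recurrent states $\mathsf U_G$. Then $f P = \lambda f$, i.e. $\lambda$ is an eigenvalue of the total chain transition matrix $P$ restricted to $\mathsf U_G$. -/
import Mathlib


/-- `C` is (the vertex set of) a directed cycle of the functional digraph of `ρ`. -/
def IsCycle {V : Type*} (ρ : V → V) (C : Set V) : Prop :=
  C.Nonempty ∧ (∀ v ∈ C, ρ v ∈ C) ∧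
    ∀ v ∈ C, ∀ w ∈ C, ∃ k : ℕ, 0 < k ∧ ρ^[k] v = w

/-- A unicycle configuration: exactly one directed cycle. -/
def IsUnicycle {V : Type*} (ρ : V → V) : Prop := ∃! C : Set V, IsCycle ρ C

/-- Recurrent states of the total chain: a spanning unicycle with the particle on its cycle. -/
abbrev UG (V : Type*) : Type _ :=
  {p : V × (V → V) // IsUnicycle p.2 ∧ ∀ C : Set V, IsCycle p.2 C → p.1 ∈ C}

noncomputable instance {V : Type*} [Finite V] : Fintype (UG V) := Fintype.ofFinite _

section Aux
variable {V : Type*}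

lemma iterate_mem {σ : V → V} {C : Set V} (hC : ∀ v ∈ C, σ v ∈ C) {v : V} (hv : v ∈ C) :
    ∀ k, σ^[k] v ∈ C := by
  intro k
  induction k with
  | zero => simpa
  | succ k ih => rw [Function.iterate_succ_apply']; exact hC _ ih

lemma cycle_eq_of_mem {σ : V → V} {C D : Set V} (hC : IsCycle σ C) (hD : IsCycle σ D)
    {v : V} (hvC : v ∈ C) (hvD : v ∈ D) : C = D := by
  apply Set.eq_of_subset_of_subset
  · intro w hw
    obtain ⟨k, _, hk⟩ := hC.2.2 v hvC w hw
    rw [← hk]; exact iterate_mem hD.2.1 hvD k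
  · intro w hw
    obtain ⟨k, _, hk⟩ := hD.2.2 v hvD w hw
    rw [← hk]; exact iterate_mem hC.2.1 hvC k

lemma exists_periodic [Finite V] (σ : V → V) (v : V) :
    ∃ a k, 0 < k ∧ σ^[k] (σ^[a] v) = σ^[a] v := by
  obtain ⟨a, b, hab, h⟩ := Finite.exists_ne_map_eq_of_infinite (fun n : ℕ => σ^[n] v)
  rcases lt_or_gt_of_ne hab with hlt | hlt
  · refine ⟨a, b - a, by omega, ?_⟩
    rw [← Function.iterate_add_apply, show b - a + a = b by omega]
    exact h.symm
  · refine ⟨b, a - b, by omega, ?_⟩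
    rw [← Function.iterate_add_apply, show a - b + b = a by omega]
    exact h

lemma orbit_isCycle (σ : V → V) {w : V} {k : ℕ} (hk : 0 < k) (hw : σ^[k] w = w) :
    IsCycle σ {u | ∃ i : ℕ, σ^[i] w = u} := by
  refine ⟨⟨w, 0, rfl⟩, ?_, ?_⟩
  · rintro v ⟨i, rfl⟩
    exact ⟨i + 1, by rw [Function.iterate_succ_apply']⟩
  · rintro v ⟨i, rfl⟩ u ⟨j, rfl⟩
    have hper : ∀ n : ℕ, σ^[k * n] w = w := by
      intro n
      induction n with
      | zero => simp
      | succ n ih => rw [mul_add, mul_one, Function.iterate_add_apply, hw, ih]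
    have hki : i + 1 ≤ k * (i + 1) := Nat.le_mul_of_pos_left _ hk
    refine ⟨j + k * (i + 1) - i, by omega, ?_⟩
    rw [← Function.iterate_add_apply,
      show j + k * (i + 1) - i + i = j + k * (i + 1) by omega,
      Function.iterate_add_apply, hper]

lemma periodic_mem_cycle [Finite V] {σ : V → V} (hσ : IsUnicycle σ) {C : Set V}
    (hC : IsCycle σ C) {v : V} {k : ℕ} (hk : 0 < k) (hv : σ^[k] v = v) : v ∈ C := by
  obtain ⟨C₀, hC₀, huniq⟩ := hσ
  have h1 : C = C₀ := huniq C hC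
  have h2 : {u | ∃ i : ℕ, σ^[i] v = u} = C₀ := huniq _ (orbit_isCycle σ hk hv)
  rw [h1, ← h2]
  exact ⟨0, rfl⟩

lemma exists_cycle [Finite V] (σ : V → V) [Nonempty V] : ∃ C, IsCycle σ C := by
  obtain ⟨a, k, hk, h⟩ := exists_periodic σ (Classical.arbitrary V)
  exact ⟨_, orbit_isCycle σ hk h⟩

lemma reach_cycle [Finite V] {σ : V → V} (hσ : IsUnicycle σ) {C : Set V}
    (hC : IsCycle σ C) (v w : V) (hw : w ∈ C) : ∃ n, σ^[n] v = w := by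
  obtain ⟨a, k, hk, h⟩ := exists_periodic σ v
  have hmem : σ^[a] v ∈ C := periodic_mem_cycle hσ hC hk h
  obtain ⟨j, _, hj⟩ := hC.2.2 _ hmem w hw
  exact ⟨j + a, by rw [Function.iterate_add_apply, hj]⟩

end Aux

section Aux2
variable {V : Type*}

lemma first_hit [DecidableEq V] (f g : V → V) (x y : V)
    (hfg : ∀ v, v ≠ x → g v = f v) (n : ℕ) (hn : f^[n] y = x) : ∃ k, g^[k] y = x := by
  induction n generalizing y with
  | zero => exact ⟨0, hn⟩
  | succ n ih =>
    by_cases h : y = x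
    · exact ⟨0, h⟩
    · obtain ⟨k, hk⟩ := ih (f y) (by rw [← Function.iterate_succ_apply]; exact hn)
      exact ⟨k + 1, by rw [Function.iterate_succ_apply, hfg y h]; exact hk⟩

lemma pred_unique {σ : V → V} {C : Set V} (hC : IsCycle σ C) {x₁ x₂ y : V}
    (h₁ : x₁ ∈ C) (h₂ : x₂ ∈ C) (e₁ : σ x₁ = y) (e₂ : σ x₂ = y) : x₁ = x₂ := by
  have key : ∀ x ∈ C, σ x = y → x = σ^[Function.minimalPeriod σ y - 1] y := by
    intro x hx hxy
    obtain ⟨k, hk, hkx⟩ := hC.2.2 x hx x hx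
    have hy : Function.IsPeriodicPt σ k y := by
      show σ^[k] y = y
      rw [← hxy, ← Function.iterate_succ_apply, Function.iterate_succ_apply', hkx, hxy]
    set mm := Function.minimalPeriod σ y with hmm
    have hmpos : 0 < mm := hy.minimalPeriod_pos hk
    have hmd : mm ∣ k := hy.minimalPeriod_dvd
    obtain ⟨c, hcdef⟩ := hmd
    have hxk : x = σ^[k - 1] y := by
      conv_lhs => rw [← hkx, show k = k - 1 + 1 by omega, Function.iterate_succ_apply, hxy]
    have hc : 0 < c := Nat.pos_of_ne_zero (by rintro rfl; simp at hcdef; omega)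
    obtain ⟨c', rfl⟩ : ∃ c', c = c' + 1 := ⟨c - 1, by omega⟩
    have hyper : σ^[mm * c'] y = y :=
      (Function.isPeriodicPt_minimalPeriod σ y).mul_const c'
    have hkeq : k - 1 = (mm - 1) + mm * c' := by
      have : k = mm * c' + mm := by rw [hcdef]; ring
      have h2 : 0 ≤ mm * c' := Nat.zero_le _
      generalize mm * c' = q at this ⊢
      omega
    rw [hxk, hkeq, Function.iterate_add_apply, hyper]
  exact (key x₁ h₁ e₁).trans (key x₂ h₂ e₂).symm

lemma particle_mem_cycle [Finite V] [DecidableEq V] {ρ : V → V} {x y : V} {σ : V → V}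
    (hρ : IsUnicycle ρ) (hx : ∀ C, IsCycle ρ C → x ∈ C)
    (hσu : IsUnicycle σ) {C : Set V} (hC : IsCycle σ C)
    (hσ : σ = Function.update ρ x y) : x ∈ C := by
  obtain ⟨Cρ, hCρ, _⟩ := hρ
  have hxρ : x ∈ Cρ := hx _ hCρ
  obtain ⟨n, hn⟩ := reach_cycle ⟨Cρ, hCρ, ‹_›⟩ hCρ y x hxρ
  obtain ⟨k, hk⟩ := first_hit ρ σ x y (fun v hv => by rw [hσ, Function.update_of_ne hv]) n hn
  have hper : σ^[k + 1] x = x := by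
    rw [Function.iterate_succ_apply, hσ, Function.update_self, ← hσ, hk]
  exact periodic_mem_cycle hσu hC (Nat.succ_pos k) hper

lemma update_unicycle [Finite V] [DecidableEq V] {σ : V → V} (hσ : IsUnicycle σ)
    {C : Set V} (hC : IsCycle σ C) {x₀ : V} (hx₀ : x₀ ∈ C) (z : V) :
    IsUnicycle (Function.update σ x₀ z) ∧
      ∀ D, IsCycle (Function.update σ x₀ z) D → x₀ ∈ D := by
  set τ := Function.update σ x₀ z with hτ
  have key : ∀ D, IsCycle τ D → x₀ ∈ D := by
    intro D hD
    by_contra hx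
    have hagree : ∀ v ∈ D, τ v = σ v := fun v hv =>
      Function.update_of_ne (by rintro rfl; exact hx hv) _ _
    have hiter : ∀ v ∈ D, ∀ k, τ^[k] v = σ^[k] v := by
      intro v hv k
      induction k with
      | zero => rfl
      | succ k ih =>
        rw [Function.iterate_succ_apply', hagree _ (iterate_mem hD.2.1 hv k), ih]
        exact (Function.iterate_succ_apply' σ k v).symm
    have hDσ : IsCycle σ D := by
      refine ⟨hD.1, fun v hv => ?_, fun v hv w hw => ?_⟩
      · have h := hD.2.1 v hv
        rwa [hagree v hv] at h
      · obtain ⟨k, hk, hkv⟩ := hD.2.2 v hv w hw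
        exact ⟨k, hk, by rw [← hiter v hv k]; exact hkv⟩
    obtain ⟨C₀, hC₀, huniq⟩ := hσ
    have hDC : D = C := (huniq D hDσ).trans (huniq C hC).symm
    exact hx (by rw [hDC]; exact hx₀)
  have : Nonempty V := ⟨hC.1.choose⟩
  obtain ⟨D, hD⟩ := exists_cycle τ
  exact ⟨⟨D, hD, fun D' hD' => cycle_eq_of_mem hD' hD (key D' hD') (key D hD)⟩, key⟩

end Aux2


/-- Local `λ`-uniformity: if each local transition matrix `m x` has left eigenvector `f x`
to eigenvalue `lam`, then `F (x, ρ) = ∏ v, f v (ρ v)` is a left eigenvector of the total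
chain transition matrix `P` (restricted to the recurrent states) to eigenvalue `lam`. -/
theorem total_chain_lambda_uniform_eigenvalue
    {V : Type*} [Fintype V] [DecidableEq V]
    (m : V → V → V → ℝ) (lam : ℝ) (f : V → V → ℝ)
    (heig : ∀ x y : V, ∑ z : V, f x z * m x z y = lam * f x y)
    (P : Matrix (UG V) (UG V) ℝ)
    (hP : ∀ s t : UG V, P s t =
      if t.1.2 = Function.update s.1.2 s.1.1 t.1.1
      then m s.1.1 (s.1.2 s.1.1) t.1.1 else 0)
    (F : UG V → ℝ)
    (hF : ∀ s : UG V, F s = ∏ v : V, f v (s.1.2 v)) :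
    ∀ t : UG V, ∑ s : UG V, F s * P s t = lam * F t := by
  intro t
  set y := t.1.1 with hy
  set σ := t.1.2 with hσ
  obtain ⟨C, hC, -⟩ := t.2.1
  have hyC : y ∈ C := t.2.2 C hC
  obtain ⟨k, hk, hky⟩ := hC.2.2 y hyC y hyC
  set x₀ := σ^[k - 1] y with hx₀def
  have hx₀C : x₀ ∈ C := iterate_mem hC.2.1 hyC (k - 1)
  have hx₀y : σ x₀ = y := by
    have h1 : σ^[k - 1 + 1] y = y := by rw [show k - 1 + 1 = k by omega]; exact hky
    rw [Function.iterate_succ_apply'] at h1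
    exact h1
  set e : V → UG V := fun z => ⟨(x₀, Function.update σ x₀ z),
    (update_unicycle t.2.1 hC hx₀C z).1, (update_unicycle t.2.1 hC hx₀C z).2⟩ with he
  set Q : ℝ := ∏ v ∈ Finset.univ.erase x₀, f v (σ v) with hQ
  have hPe : ∀ z, P (e z) t = m x₀ z y := by
    intro z
    rw [hP]
    have hcond : t.1.2 = Function.update (e z).1.2 (e z).1.1 t.1.1 := by
      show σ = Function.update (Function.update σ x₀ z) x₀ y
      rw [Function.update_idem]
      funext v
      by_cases hv : v = x₀
      · subst hv; rw [Function.update_self, hx₀y]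
      · rw [Function.update_of_ne hv]
    rw [if_pos hcond]
    show m x₀ (Function.update σ x₀ z x₀) y = m x₀ z y
    rw [Function.update_self]
  have hFe : ∀ z, F (e z) = f x₀ z * Q := by
    intro z
    rw [hF, ← Finset.mul_prod_erase Finset.univ _ (Finset.mem_univ x₀)]
    show f x₀ (Function.update σ x₀ z x₀) *
      (∏ v ∈ Finset.univ.erase x₀, f v (Function.update σ x₀ z v)) = _
    rw [Function.update_self]
    congr 1
    exact Finset.prod_congr rfl fun v hv =>
      by rw [Function.update_of_ne (Finset.ne_of_mem_erase hv)]
  have hFt : F t = f x₀ y * Q := by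
    rw [hF, ← Finset.mul_prod_erase Finset.univ _ (Finset.mem_univ x₀)]
    show f x₀ (σ x₀) * (∏ v ∈ Finset.univ.erase x₀, f v (σ v)) = f x₀ y * Q
    rw [hx₀y]
  have hinj : Set.InjOn e (Finset.univ : Finset V) := by
    intro z₁ _ z₂ _ hz
    have := congrArg (fun s : UG V => s.1.2 x₀) hz
    simpa [he] using this
  have hzero : ∀ s ∈ (Finset.univ : Finset (UG V)),
      s ∉ e '' (Finset.univ : Finset V) → F s * P s t = 0 := by
    intro s _ hs
    rw [hP]
    split_ifs with h
    · exfalso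
      apply hs
      have hσy : σ s.1.1 = y := by rw [hσ, h, Function.update_self]
      have hxC : s.1.1 ∈ C := particle_mem_cycle s.2.1 s.2.2 t.2.1 hC h
      have hx : s.1.1 = x₀ := pred_unique hC hxC hx₀C hσy hx₀y
      refine ⟨s.1.2 s.1.1, by simp, ?_⟩
      apply Subtype.ext
      apply Prod.ext
      · exact hx.symm
      · show Function.update σ x₀ (s.1.2 s.1.1) = s.1.2
        funext v
        by_cases hv : v = x₀
        · subst hv; rw [Function.update_self, hx]
        · rw [Function.update_of_ne hv, hσ, h, hx,
            Function.update_of_ne hv]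
    · exact mul_zero _
  calc ∑ s : UG V, F s * P s t
      = ∑ z : V, F (e z) * P (e z) t :=
        (Finset.sum_of_injOn e hinj (fun z _ => by simp) hzero fun z _ => rfl).symm
    _ = ∑ z : V, f x₀ z * m x₀ z y * Q := by
        refine Finset.sum_congr rfl fun z _ => ?_
        rw [hFe, hPe]; ring
    _ = (∑ z : V, f x₀ z * m x₀ z y) * Q := by rw [Finset.sum_mul]
    _ = lam * F t := by rw [heig, hFt]; ring
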